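/- arXiv:2605.02506 — 7 statements merged into one kernel-verified Lean document; each statement's English description precedes it below -/
import Mathlib

section
/- Let α and β be types, W : Set α a set of disturbances, and 𝒦, 𝒦̂ : Set β sets of controllers with 𝒦 ⊆ 𝒦̂. Let J : β → α → ℝ be a cost function. Assume (i) for every K ∈ 𝒦̂ there exists w_K ∈ W such that J K w' ≤ J K w_K for all w' ∈ W (the worst-case cost over W is attained), and (ii) the oracle K̂ ∈ 𝒦̂ is worst-case optimal over 𝒦̂, i.e. for every K' ∈ 𝒦̂ one has sSup (J K̂ '' W) ≤ sSup (J K' '' W). Then for every K ∈ 𝒦 there exists w ∈ W with J K̂ w ≤ J K w; consequently, if the set {J K w − J K̂ w | w ∈ W} is bounded above, then its supremum is nonnegative. -/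
/-- Well-posedness of the spatial regret metric for an `H∞`-optimal oracle:
if the oracle `Khat` minimises the worst-case cost over the enlarged class `𝒦hat ⊇ 𝒦`,
and the worst-case cost over `W` is attained for every controller in `𝒦hat`, then
for every `K ∈ 𝒦` there is a disturbance on which the oracle does at least as well,
hence the spatial regret `sSup {J K w − J Khat w | w ∈ W}` is nonnegative. -/
theorem spatial_regret_well_posed_Hinf {α β : Type*} (W : Set α) (𝒦 𝒦hat : Set β)
    (hsub : 𝒦 ⊆ 𝒦hat) (J : β → α → ℝ)
    (hatt : ∀ K ∈ 𝒦hat, ∃ wK ∈ W, ∀ w' ∈ W, J K w' ≤ J K wK)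
    (Khat : β) (hKhat : Khat ∈ 𝒦hat)
    (hopt : ∀ K' ∈ 𝒦hat, sSup (J Khat '' W) ≤ sSup (J K' '' W)) :
    ∀ K ∈ 𝒦, (∃ w ∈ W, J Khat w ≤ J K w) ∧
      (BddAbove ((fun w => J K w - J Khat w) '' W) →
        0 ≤ sSup ((fun w => J K w - J Khat w) '' W)) := by
  intro K hK
  obtain ⟨wK, hwK, hwKmax⟩ := hatt K (hsub hK)
  obtain ⟨wh, hwh, hwhmax⟩ := hatt Khat hKhat
  have hmem : J Khat wK ≤ J K wK := by
    have h1 : J Khat wK ≤ sSup (J Khat '' W) := by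
      apply le_csSup
      · exact ⟨J Khat wh, fun x ⟨w, hw, hx⟩ => hx ▸ hwhmax w hw⟩
      · exact ⟨wK, hwK, rfl⟩
    have h2 : sSup (J K '' W) ≤ J K wK := by
      refine csSup_le ⟨J K wK, ⟨wK, hwK, rfl⟩⟩ ?_
      rintro x ⟨w, hw, rfl⟩; exact hwKmax w hw
    exact h1.trans ((hopt K (hsub hK)).trans h2)
  refine ⟨⟨wK, hwK, hmem⟩, fun hbdd => ?_⟩
  have : (0:ℝ) ≤ J K wK - J Khat wK := by linarith
  exact this.trans (le_csSup hbdd ⟨wK, hwK, rfl⟩)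
end

section
/- Let A be a Hermitian k × k complex matrix, B an m × k complex matrix, and Φ, Φ_c complex matrices of size m × n. If the 2×2 block matrix fromBlocks A Bᴴ B (Φ_c Φᴴ + Φ Φ_cᴴ − Φ_c Φ_cᴴ) is positive semidefinite, then the block matrix fromBlocks A Bᴴ B (ΦΦᴴ) is positive semidefinite. -/
open Matrix ComplexOrder

/-- Key step of the convexification theorem: if the linearised block matrix inequality
(with the convex lower bound `ΦcΦᴴ + ΦΦcᴴ − ΦcΦcᴴ` in the lower-right block) is
positive semidefinite, then so is the original block matrix with `ΦΦᴴ` in the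
lower-right block. -/
theorem fromBlocks_psd_of_linearised_psd {k m n : ℕ}
    (A : Matrix (Fin k) (Fin k) ℂ) (hA : A.IsHermitian)
    (B : Matrix (Fin m) (Fin k) ℂ)
    (Φ Φc : Matrix (Fin m) (Fin n) ℂ)
    (h : (Matrix.fromBlocks A Bᴴ B (Φc * Φᴴ + Φ * Φcᴴ - Φc * Φcᴴ)).PosSemidef) :
    (Matrix.fromBlocks A Bᴴ B (Φ * Φᴴ)).PosSemidef := by
  have h2 : (Matrix.fromBlocks (0 : Matrix (Fin k) (Fin k) ℂ) 0 0
      ((Φ - Φc) * (Φ - Φc)ᴴ)).PosSemidef := by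
    have := Matrix.posSemidef_self_mul_conjTranspose
      (Matrix.fromBlocks (0 : Matrix (Fin k) (Fin k) ℂ) 0 0 (Φ - Φc))
    simpa [Matrix.fromBlocks_conjTranspose, Matrix.fromBlocks_multiply] using this
  have key : Matrix.fromBlocks A Bᴴ B (Φ * Φᴴ)
      = Matrix.fromBlocks A Bᴴ B (Φc * Φᴴ + Φ * Φcᴴ - Φc * Φcᴴ)
        + Matrix.fromBlocks 0 0 0 ((Φ - Φc) * (Φ - Φc)ᴴ) := by
    have heq : Φ * Φᴴ = (Φc * Φᴴ + Φ * Φcᴴ - Φc * Φcᴴ) + (Φ - Φc) * (Φ - Φc)ᴴ := by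
      rw [conjTranspose_sub, Matrix.sub_mul, Matrix.mul_sub, Matrix.mul_sub]
      abel
    rw [heq]
    simp [Matrix.fromBlocks_add]
  rw [key]
  exact h.add h2
end

section
/- Let G₁₁ (q × r), G₁₂ (q × m), G₂₁ (p × r), G₂₂ (p × m) be complex matrices with G₁₂ᴴG₁₂ invertible, let X (m × p) and Y (m × m) be complex matrices with Y invertible and M := Y − X·G₂₂ invertible, and set K := Y⁻¹·X, G₁₂^L := (G₁₂ᴴG₁₂)⁻¹G₁₂ᴴ, Φ := M·G₁₂^L, Φᴿ := Φᴴ(ΦΦᴴ)⁻¹, and Ψ := I − G₁₂·G₁₂^L. Then the closed-loop matrix T := G₁₁ + G₁₂·K·(I − G₂₂·K)⁻¹·G₂₁ satisfies T = G₁₁ + G₁₂·M⁻¹·X·G₂₁ = Φᴿ·(Φ·G₁₁ + X·G₂₁) + Ψ·G₁₁. -/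
open Matrix

/-- Left inverse `G^L := (GᴴG)⁻¹Gᴴ` of a full-column-rank matrix. -/
noncomputable def leftInv {q m : ℕ} (G : Matrix (Fin q) (Fin m) ℂ) :
    Matrix (Fin m) (Fin q) ℂ :=
  (Gᴴ * G)⁻¹ * Gᴴ

/-- Right inverse `Φᴿ := Φᴴ(ΦΦᴴ)⁻¹` of a full-row-rank matrix. -/
noncomputable def rightInv {m q : ℕ} (Φ : Matrix (Fin m) (Fin q) ℂ) :
    Matrix (Fin q) (Fin m) ℂ :=
  Φᴴ * (Φ * Φᴴ)⁻¹

/-- Closed-loop reformulation: with `K := Y⁻¹X`, `M := Y − X·G₂₂` invertible,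
`Φ := M·G₁₂^L` and `Ψ := I − G₁₂·G₁₂^L`, the closed-loop matrix
`T := G₁₁ + G₁₂·K·(I − G₂₂·K)⁻¹·G₂₁` satisfies
`T = G₁₁ + G₁₂·M⁻¹·X·G₂₁ = Φᴿ·(Φ·G₁₁ + X·G₂₁) + Ψ·G₁₁`. -/
theorem closed_loop_decomposition {q r p m : ℕ}
    (G11 : Matrix (Fin q) (Fin r) ℂ) (G12 : Matrix (Fin q) (Fin m) ℂ)
    (G21 : Matrix (Fin p) (Fin r) ℂ) (G22 : Matrix (Fin p) (Fin m) ℂ)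
    (hG12 : IsUnit (G12ᴴ * G12))
    (X : Matrix (Fin m) (Fin p) ℂ) (Y : Matrix (Fin m) (Fin m) ℂ)
    (hY : IsUnit Y) (hM : IsUnit (Y - X * G22)) :
    G11 + G12 * (Y⁻¹ * X) *
        ((1 : Matrix (Fin p) (Fin p) ℂ) - G22 * (Y⁻¹ * X))⁻¹ * G21
      = G11 + G12 * (Y - X * G22)⁻¹ * X * G21 ∧
    G11 + G12 * (Y - X * G22)⁻¹ * X * G21
      = rightInv ((Y - X * G22) * leftInv G12) *
          (((Y - X * G22) * leftInv G12) * G11 + X * G21)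
        + (1 - G12 * leftInv G12) * G11 := by
  have hYd : IsUnit Y.det := (Matrix.isUnit_iff_isUnit_det _).1 hY
  have hMd : IsUnit (Y - X * G22).det := (Matrix.isUnit_iff_isUnit_det _).1 hM
  have hAd : IsUnit (G12ᴴ * G12).det := (Matrix.isUnit_iff_isUnit_det _).1 hG12
  set M := Y - X * G22 with hMdef
  set A := G12ᴴ * G12 with hAdef
  have hWd : IsUnit ((1 : Matrix (Fin p) (Fin p) ℂ) - G22 * (Y⁻¹ * X)).det := by
    have h1 : (1 : Matrix (Fin p) (Fin p) ℂ) - G22 * (Y⁻¹ * X)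
        = 1 + (-G22) * (Y⁻¹ * X) := by rw [Matrix.neg_mul, ← sub_eq_add_neg]
    have h2 : (1 : Matrix (Fin m) (Fin m) ℂ) + (Y⁻¹ * X) * (-G22)
        = Y⁻¹ * M := by
      rw [hMdef, Matrix.mul_sub, Matrix.nonsing_inv_mul Y hYd, Matrix.mul_neg,
        Matrix.mul_assoc, ← sub_eq_add_neg]
    rw [h1, Matrix.det_one_add_mul_comm, h2, Matrix.det_mul]
    exact (Matrix.isUnit_nonsing_inv_det Y hYd).mul hMd
  have hW1 : ((1 : Matrix (Fin p) (Fin p) ℂ) - G22 * (Y⁻¹ * X)) *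
      ((1 : Matrix (Fin p) (Fin p) ℂ) - G22 * (Y⁻¹ * X))⁻¹ = 1 :=
    Matrix.mul_nonsing_inv _ hWd
  have key : Y⁻¹ * X * ((1 : Matrix (Fin p) (Fin p) ℂ) - G22 * (Y⁻¹ * X))⁻¹
      = M⁻¹ * X := by
    have hMX : M * (Y⁻¹ * X)
        = X * ((1 : Matrix (Fin p) (Fin p) ℂ) - G22 * (Y⁻¹ * X)) := by
      rw [hMdef, Matrix.sub_mul, ← Matrix.mul_assoc Y, Matrix.mul_nonsing_inv Y hYd,
        Matrix.one_mul, Matrix.mul_sub, Matrix.mul_one, ← Matrix.mul_assoc X]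
    have h3 : M * (Y⁻¹ * X *
        ((1 : Matrix (Fin p) (Fin p) ℂ) - G22 * (Y⁻¹ * X))⁻¹) = X := by
      rw [← Matrix.mul_assoc, hMX, Matrix.mul_assoc, hW1, Matrix.mul_one]
    have h4 : M⁻¹ * (M * (Y⁻¹ * X *
        ((1 : Matrix (Fin p) (Fin p) ℂ) - G22 * (Y⁻¹ * X))⁻¹))
        = Y⁻¹ * X * ((1 : Matrix (Fin p) (Fin p) ℂ) - G22 * (Y⁻¹ * X))⁻¹ := by
      rw [← Matrix.mul_assoc M⁻¹ M, Matrix.nonsing_inv_mul M hMd, Matrix.one_mul]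
    rw [← h4, h3]
  constructor
  · rw [Matrix.mul_assoc G12, Matrix.mul_assoc G12, key, Matrix.mul_assoc G12,
      Matrix.mul_assoc G12]
  · have hMHd : IsUnit (Mᴴ).det := by
      rw [Matrix.det_conjTranspose]; exact hMd.star
    have hAinvH : (A⁻¹)ᴴ = A⁻¹ := by
      rw [Matrix.conjTranspose_nonsing_inv]
      congr 1
      rw [hAdef, Matrix.conjTranspose_mul, Matrix.conjTranspose_conjTranspose]
    have hPhiH : (M * leftInv G12)ᴴ = G12 * A⁻¹ * Mᴴ := by
      rw [leftInv, ← hAdef, Matrix.conjTranspose_mul, Matrix.conjTranspose_mul,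
        Matrix.conjTranspose_conjTranspose, hAinvH, Matrix.mul_assoc]
    have hPhiPhiH : (M * leftInv G12) * (M * leftInv G12)ᴴ = M * A⁻¹ * Mᴴ := by
      rw [hPhiH, leftInv, ← hAdef]
      have h5 : G12ᴴ * (G12 * (A⁻¹ * Mᴴ)) = Mᴴ := by
        rw [← Matrix.mul_assoc G12ᴴ G12, ← hAdef, ← Matrix.mul_assoc A,
          Matrix.mul_nonsing_inv A hAd, Matrix.one_mul]
      simp only [Matrix.mul_assoc, h5]
    have hR : rightInv (M * leftInv G12) = G12 * M⁻¹ := by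
      rw [rightInv, hPhiPhiH, hPhiH, Matrix.mul_inv_rev, Matrix.mul_inv_rev,
        Matrix.nonsing_inv_nonsing_inv A hAd]
      have h6 : Mᴴ * (Mᴴ⁻¹ * (A * M⁻¹)) = A * M⁻¹ := by
        rw [← Matrix.mul_assoc Mᴴ, Matrix.mul_nonsing_inv _ hMHd, Matrix.one_mul]
      have h7 : A⁻¹ * (A * M⁻¹) = M⁻¹ := by
        rw [← Matrix.mul_assoc, Matrix.nonsing_inv_mul A hAd, Matrix.one_mul]
      simp only [Matrix.mul_assoc, h6, h7]
    rw [hR]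
    have hcancel : G12 * M⁻¹ * (M * leftInv G12 * G11)
        = G12 * leftInv G12 * G11 := by
      rw [Matrix.mul_assoc G12 M⁻¹, ← Matrix.mul_assoc M⁻¹, ← Matrix.mul_assoc M⁻¹,
        Matrix.nonsing_inv_mul M hMd, Matrix.one_mul, Matrix.mul_assoc,
        ← Matrix.mul_assoc G12]
    rw [Matrix.mul_add, hcancel]
    simp only [Matrix.sub_mul, Matrix.one_mul, Matrix.mul_assoc]
    abel
end

section
/- Let G₁₁ (q × r), G₁₂ (q × m), G₂₁ (p × r), G₂₂ (p × m) be complex matrices with G₁₂ᴴG₁₂ invertible, let X (m × p) and Y (m × m) be complex matrices with Y invertible and M := Y − X·G₂₂ invertible, and set G₁₂^L := (G₁₂ᴴG₁₂)⁻¹G₁₂ᴴ, Φ := M·G₁₂^L, Ψ := I − G₁₂·G₁₂^L, and T := G₁₁ + G₁₂·M⁻¹·X·G₂₁. Then Tᴴ·T = (Φ·G₁₁ + X·G₂₁)ᴴ·(ΦΦᴴ)⁻¹·(Φ·G₁₁ + X·G₂₁) + (Ψ·G₁₁)ᴴ·(Ψ·G₁₁). -/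
open Matrix

/-- Orthogonal decomposition of `TᴴT` for the closed-loop matrix
`T := G₁₁ + G₁₂·M⁻¹·X·G₂₁` with `M := Y − X·G₂₂` invertible, `Φ := M·G₁₂^L`
and `Ψ := I − G₁₂·G₁₂^L`:
`TᴴT = (ΦG₁₁ + XG₂₁)ᴴ(ΦΦᴴ)⁻¹(ΦG₁₁ + XG₂₁) + (ΨG₁₁)ᴴ(ΨG₁₁)`. -/
theorem closed_loop_quadratic_decomposition {q r p m : ℕ}
    (G11 : Matrix (Fin q) (Fin r) ℂ) (G12 : Matrix (Fin q) (Fin m) ℂ)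
    (G21 : Matrix (Fin p) (Fin r) ℂ) (G22 : Matrix (Fin p) (Fin m) ℂ)
    (hG12 : IsUnit (G12ᴴ * G12))
    (X : Matrix (Fin m) (Fin p) ℂ) (Y : Matrix (Fin m) (Fin m) ℂ)
    (hY : IsUnit Y) (hM : IsUnit (Y - X * G22)) :
    (G11 + G12 * (Y - X * G22)⁻¹ * X * G21)ᴴ *
        (G11 + G12 * (Y - X * G22)⁻¹ * X * G21)
      = (((Y - X * G22) * leftInv G12) * G11 + X * G21)ᴴ *
          (((Y - X * G22) * leftInv G12) *
            ((Y - X * G22) * leftInv G12)ᴴ)⁻¹ *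
          (((Y - X * G22) * leftInv G12) * G11 + X * G21)
        + ((1 - G12 * leftInv G12) * G11)ᴴ * ((1 - G12 * leftInv G12) * G11) := by
  set M := Y - X * G22 with hMdef
  set L := leftInv G12 with hLdef
  set N := G12ᴴ * G12 with hNdef
  set T := G11 + G12 * M⁻¹ * X * G21 with hTdef
  have hNdet : IsUnit N.det := (Matrix.isUnit_iff_isUnit_det _).mp hG12
  have hMdet : IsUnit M.det := (Matrix.isUnit_iff_isUnit_det _).mp hM
  have hMHdet : IsUnit Mᴴ.det := by
    rw [Matrix.det_conjTranspose]; exact hMdet.star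
  have hNH : Nᴴ = N := by simp [hNdef, Matrix.conjTranspose_mul]
  have hLG : L * G12 = 1 := by
    rw [hLdef, leftInv, Matrix.mul_assoc, ← hNdef, Matrix.nonsing_inv_mul _ hNdet]
  have hLH : Lᴴ = G12 * N⁻¹ := by
    rw [hLdef, leftInv, Matrix.conjTranspose_mul, Matrix.conjTranspose_conjTranspose,
      Matrix.conjTranspose_nonsing_inv, ← hNdef, hNH]
  have hLLH : L * Lᴴ = N⁻¹ := by
    rw [hLH, hLdef, leftInv, ← hNdef, Matrix.mul_assoc, ← Matrix.mul_assoc G12ᴴ,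
      ← hNdef, Matrix.mul_nonsing_inv _ hNdet, Matrix.mul_one]
  -- the projection P = G12 * L
  have hPH : (G12 * L)ᴴ = G12 * L := by
    rw [Matrix.conjTranspose_mul, hLH, hLdef, leftInv, ← hNdef, Matrix.mul_assoc]
  have hP2 : (G12 * L) * (G12 * L) = G12 * L := by
    rw [Matrix.mul_assoc, ← Matrix.mul_assoc L, hLG, Matrix.one_mul]
  -- ΦΦᴴ and its inverse
  have hPhiPhiH : (M * L) * (M * L)ᴴ = M * (N⁻¹ * Mᴴ) := by
    rw [Matrix.conjTranspose_mul, Matrix.mul_assoc, ← Matrix.mul_assoc L, hLLH]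
  have hInv : ((M * L) * (M * L)ᴴ)⁻¹ = Mᴴ⁻¹ * (N * M⁻¹) := by
    rw [hPhiPhiH, Matrix.mul_inv_rev, Matrix.mul_inv_rev,
      Matrix.nonsing_inv_nonsing_inv _ hNdet, Matrix.mul_assoc]
  -- Φᴴ (ΦΦᴴ)⁻¹ Φ = G12 L
  have hProj : (M * L)ᴴ * (((M * L) * (M * L)ᴴ)⁻¹ * (M * L)) = G12 * L := by
    rw [hInv, Matrix.conjTranspose_mul, hLH]
    calc (G12 * N⁻¹) * Mᴴ * (Mᴴ⁻¹ * (N * M⁻¹) * (M * L))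
        = G12 * N⁻¹ * ((Mᴴ * Mᴴ⁻¹) * (N * ((M⁻¹ * M) * L))) := by
          simp only [Matrix.mul_assoc]
      _ = G12 * (N⁻¹ * (N * L)) := by
          rw [Matrix.mul_nonsing_inv _ hMHdet, Matrix.nonsing_inv_mul _ hMdet,
            Matrix.one_mul, Matrix.one_mul, Matrix.mul_assoc]
      _ = G12 * L := by
          rw [← Matrix.mul_assoc N⁻¹, Matrix.nonsing_inv_mul _ hNdet, Matrix.one_mul]
  -- ΨᴴΨ = 1 - G12 L
  have hPsi : (1 - G12 * L)ᴴ * (1 - G12 * L) = 1 - G12 * L := by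
    rw [Matrix.conjTranspose_sub, Matrix.conjTranspose_one, hPH]
    simp only [Matrix.sub_mul, Matrix.mul_sub, Matrix.one_mul, Matrix.mul_one, hP2]
    abel
  -- ΦG11 + XG21 = Φ T
  have hPhiT : (M * L) * G11 + X * G21 = (M * L) * T := by
    rw [hTdef, Matrix.mul_add]
    congr 1
    have : (M * L) * (G12 * M⁻¹ * X * G21) = X * G21 := by
      calc (M * L) * (G12 * M⁻¹ * X * G21)
          = M * ((L * G12) * (M⁻¹ * (X * G21))) := by simp only [Matrix.mul_assoc]
        _ = (M * M⁻¹) * (X * G21) := by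
            rw [hLG, Matrix.one_mul, ← Matrix.mul_assoc]
        _ = X * G21 := by rw [Matrix.mul_nonsing_inv _ hMdet, Matrix.one_mul]
    exact this.symm
  -- ΨG11 = Ψ T
  have hPsiG12 : (1 - G12 * L) * G12 = 0 := by
    rw [Matrix.sub_mul, Matrix.one_mul, Matrix.mul_assoc, hLG, Matrix.mul_one, sub_self]
  have hPsiT : (1 - G12 * L) * G11 = (1 - G12 * L) * T := by
    rw [hTdef, Matrix.mul_add]
    have : (1 - G12 * L) * (G12 * M⁻¹ * X * G21) = 0 := by
      rw [show G12 * M⁻¹ * X * G21 = G12 * (M⁻¹ * X * G21) by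
          simp only [Matrix.mul_assoc],
        ← Matrix.mul_assoc, hPsiG12, Matrix.zero_mul]
    rw [this, add_zero]
  -- assemble
  rw [hPhiT, hPsiT]
  have hProjT : (M * L)ᴴ * (((M * L) * (M * L)ᴴ)⁻¹ * ((M * L) * T)) = (G12 * L) * T := by
    rw [← Matrix.mul_assoc (((M * L) * (M * L)ᴴ)⁻¹), ← Matrix.mul_assoc ((M * L)ᴴ), hProj]
  have h1 : ((M * L) * T)ᴴ * (((M * L) * (M * L)ᴴ)⁻¹) * ((M * L) * T)
      = Tᴴ * ((G12 * L) * T) := by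
    rw [Matrix.conjTranspose_mul, Matrix.mul_assoc, Matrix.mul_assoc, hProjT]
  have h2 : ((1 - G12 * L) * T)ᴴ * ((1 - G12 * L) * T) = Tᴴ * ((1 - G12 * L) * T) := by
    rw [Matrix.conjTranspose_mul, Matrix.mul_assoc, ← Matrix.mul_assoc ((1 - G12 * L)ᴴ),
      hPsi]
  rw [h1, h2, ← Matrix.mul_add, ← Matrix.add_mul,
    show G12 * L + (1 - G12 * L) = (1 : Matrix (Fin q) (Fin q) ℂ) by abel,
    Matrix.one_mul]
end

section
/- Let G₁₁ (q × r), G₁₂ (q × m), G₂₁ (p × r), G₂₂ (p × m) be complex matrices with G₁₂ᴴG₁₂ invertible, let X (m × p) and Y (m × m) be complex matrices with Y invertible and M := Y − X·G₂₂ invertible, set G₁₂^L := (G₁₂ᴴG₁₂)⁻¹G₁₂ᴴ, Φ := M·G₁₂^L, Ψ := I − G₁₂·G₁₂^L, T := G₁₁ + G₁₂·M⁻¹·X·G₂₁, and let Γ̂ be a Hermitian r × r complex matrix. Then Γ̂ − Tᴴ·T is positive semidefinite if and only if the block matrix fromBlocks (Γ̂ − (Ψ·G₁₁)ᴴ·(Ψ·G₁₁))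 (Φ·G₁₁ + X·G₂₁)ᴴ (Φ·G₁₁ + X·G₂₁) (ΦΦᴴ) is positive semidefinite. -/
open Matrix ComplexOrder

/-! `P := G₁₂·G₁₂^L` is the orthogonal projection onto the range of `G₁₂`, with `Ψ = 1 - P`,
`Φ·G₁₂ = M` and `Φᴴ(ΦΦᴴ)⁻¹Φ = P`. Hence `Ψ·G₁₁ = Ψ·T` and `Φ·G₁₁ + X·G₂₁ = Φ·T`, and as `ΦΦᴴ`
is positive definite, the block matrix is positive semidefinite iff its Schur complement
`Γ̂ - Tᴴ(1 - P)T - TᴴPT = Γ̂ - TᴴT` is. -/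

namespace Matrix

variable {n k r R : Type*} [Fintype n] [Fintype k] [DecidableEq n] [CommRing R] [StarRing R]

theorem sub_conjTranspose_mul_one_sub_sub_conjTranspose_mul {P : Matrix n n R}
    (hP : IsStarProjection P) {Φ : Matrix k n R} {D : Matrix k k R} (hΦ : Φᴴ * D * Φ = P)
    (Γ : Matrix r r R) (T : Matrix n r R) :
    Γ - ((1 - P) * T)ᴴ * ((1 - P) * T) - (Φ * T)ᴴ * D * (Φ * T) = Γ - Tᴴ * T := by
  have hΨ : (1 - P)ᴴ * (1 - P) = 1 - P := by
    rw [← star_eq_conjTranspose, hP.one_sub.isSelfAdjoint.star_eq]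
    exact hP.one_sub.isIdempotentElem
  have hQ : (Φ * T)ᴴ * D * (Φ * T) = Tᴴ * P * T := by
    simp only [← hΦ, conjTranspose_mul, Matrix.mul_assoc]
  rw [hQ, conjTranspose_mul, Matrix.mul_assoc, ← Matrix.mul_assoc _ (1 - P), hΨ, sub_sub,
    Matrix.mul_assoc Tᴴ P, ← Matrix.mul_add, ← Matrix.add_mul, sub_add_cancel, Matrix.one_mul]

end Matrix

section LeftInverse

variable {q m : ℕ} {G : Matrix (Fin q) (Fin m) ℂ}

theorem leftInv_mul (hG : IsUnit (Gᴴ * G)) : leftInv G * G = 1 := by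
  rw [leftInv, Matrix.mul_assoc, nonsing_inv_mul _ ((isUnit_iff_isUnit_det _).mp hG)]

theorem one_sub_mul_leftInv_mul (hG : IsUnit (Gᴴ * G)) : (1 - G * leftInv G) * G = 0 := by
  rw [Matrix.sub_mul, Matrix.one_mul, Matrix.mul_assoc, leftInv_mul hG, Matrix.mul_one, sub_self]

theorem conjTranspose_leftInv : (leftInv G)ᴴ = G * (Gᴴ * G)⁻¹ := by
  rw [leftInv, conjTranspose_mul, conjTranspose_conjTranspose, conjTranspose_nonsing_inv,
    conjTranspose_mul, conjTranspose_conjTranspose]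

theorem isStarProjection_mul_leftInv (hG : IsUnit (Gᴴ * G)) :
    IsStarProjection (G * leftInv G) where
  isIdempotentElem := by
    rw [IsIdempotentElem, Matrix.mul_assoc, ← Matrix.mul_assoc (leftInv G), leftInv_mul hG,
      Matrix.one_mul]
  isSelfAdjoint := by
    rw [IsSelfAdjoint, star_eq_conjTranspose, conjTranspose_mul, conjTranspose_leftInv,
      Matrix.mul_assoc, leftInv]

theorem mul_leftInv_mul_conjTranspose (hG : IsUnit (Gᴴ * G)) (M : Matrix (Fin m) (Fin m) ℂ) :
    M * leftInv G * (M * leftInv G)ᴴ = M * (Gᴴ * G)⁻¹ * Mᴴ := by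
  simp only [conjTranspose_mul, conjTranspose_leftInv, Matrix.mul_assoc]
  rw [← Matrix.mul_assoc (leftInv G) G, leftInv_mul hG, Matrix.one_mul]

theorem posDef_mul_leftInv_mul_conjTranspose (hG : IsUnit (Gᴴ * G))
    {M : Matrix (Fin m) (Fin m) ℂ} (hM : IsUnit M) :
    (M * leftInv G * (M * leftInv G)ᴴ).PosDef := by
  rw [mul_leftInv_mul_conjTranspose hG, ← star_eq_conjTranspose,
    IsUnit.posDef_star_right_conjugate_iff hM, posDef_inv_iff]
  exact (posSemidef_conjTranspose_mul_self G).posDef_iff_isUnit.mpr hG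

theorem conjTranspose_mul_leftInv_mul_inv_mul (hG : IsUnit (Gᴴ * G))
    {M : Matrix (Fin m) (Fin m) ℂ} (hM : IsUnit M) :
    (M * leftInv G)ᴴ * (M * leftInv G * (M * leftInv G)ᴴ)⁻¹ * (M * leftInv G) = G * leftInv G := by
  have hM' : IsUnit M.det := (isUnit_iff_isUnit_det M).mp hM
  have hG' : IsUnit (Gᴴ * G).det := (isUnit_iff_isUnit_det _).mp hG
  rw [mul_leftInv_mul_conjTranspose hG, Matrix.mul_inv_rev, Matrix.mul_inv_rev,
    nonsing_inv_nonsing_inv _ hG', conjTranspose_mul, conjTranspose_leftInv]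
  have hMH : IsUnit Mᴴ.det := by rw [det_conjTranspose]; exact hM'.star
  simp only [Matrix.mul_assoc]
  rw [mul_nonsing_inv_cancel_left _ _ hMH, nonsing_inv_mul_cancel_left _ _ hM',
    ← Matrix.mul_assoc Gᴴ, nonsing_inv_mul_cancel_left _ _ hG', leftInv]

end LeftInverse

theorem spatial_regret_schur_equivalence_general {q r p m : ℕ}
    (G11 : Matrix (Fin q) (Fin r) ℂ) (G12 : Matrix (Fin q) (Fin m) ℂ)
    (G21 : Matrix (Fin p) (Fin r) ℂ) (G22 : Matrix (Fin p) (Fin m) ℂ)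
    (hG12 : IsUnit (G12ᴴ * G12))
    (X : Matrix (Fin m) (Fin p) ℂ) (Y : Matrix (Fin m) (Fin m) ℂ)
    (hM : IsUnit (Y - X * G22))
    (Γhat : Matrix (Fin r) (Fin r) ℂ) :
    (Γhat - (G11 + G12 * (Y - X * G22)⁻¹ * X * G21)ᴴ *
        (G11 + G12 * (Y - X * G22)⁻¹ * X * G21)).PosSemidef ↔
    (Matrix.fromBlocks
        (Γhat - ((1 - G12 * leftInv G12) * G11)ᴴ * ((1 - G12 * leftInv G12) * G11))
        (((Y - X * G22) * leftInv G12) * G11 + X * G21)ᴴ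
        (((Y - X * G22) * leftInv G12) * G11 + X * G21)
        (((Y - X * G22) * leftInv G12) * ((Y - X * G22) * leftInv G12)ᴴ)).PosSemidef := by
  set M := Y - X * G22
  set T := G11 + G12 * M⁻¹ * X * G21
  have hΦT : M * leftInv G12 * G11 + X * G21 = M * leftInv G12 * T := by
    rw [Matrix.mul_add, add_right_inj]
    simp only [← Matrix.mul_assoc]
    rw [Matrix.mul_assoc M, leftInv_mul hG12, Matrix.mul_one,
      mul_nonsing_inv _ ((isUnit_iff_isUnit_det M).mp hM), Matrix.one_mul]
  have hΨT : (1 - G12 * leftInv G12) * G11 = (1 - G12 * leftInv G12) * T := by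
    simp only [T, Matrix.mul_add, ← Matrix.mul_assoc, one_sub_mul_leftInv_mul hG12,
      Matrix.zero_mul, add_zero]
  have hD := posDef_mul_leftInv_mul_conjTranspose hG12 hM
  have := hD.isUnit.invertible
  have hSchur := PosDef.fromBlocks₂₂
    (Γhat - ((1 - G12 * leftInv G12) * T)ᴴ * ((1 - G12 * leftInv G12) * T))
    (M * leftInv G12 * T)ᴴ hD
  rw [conjTranspose_conjTranspose] at hSchur
  rw [hΦT, hΨT, hSchur,
    sub_conjTranspose_mul_one_sub_sub_conjTranspose_mul (isStarProjection_mul_leftInv hG12)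
      (conjTranspose_mul_leftInv_mul_inv_mul hG12 hM)]

/-- Schur-complement reformulation of the pointwise spatial-regret constraint:
with `M := Y − X·G₂₂` invertible, `Φ := M·G₁₂^L`, `Ψ := I − G₁₂·G₁₂^L`,
`T := G₁₁ + G₁₂·M⁻¹·X·G₂₁`, and `Γ̂` Hermitian, `Γ̂ − TᴴT ⪰ 0` holds iff the
block matrix `[[Γ̂ − (ΨG₁₁)ᴴ(ΨG₁₁), (ΦG₁₁ + XG₂₁)ᴴ], [ΦG₁₁ + XG₂₁, ΦΦᴴ]]`
is positive semidefinite. -/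
theorem spatial_regret_schur_equivalence {q r p m : ℕ}
    (G11 : Matrix (Fin q) (Fin r) ℂ) (G12 : Matrix (Fin q) (Fin m) ℂ)
    (G21 : Matrix (Fin p) (Fin r) ℂ) (G22 : Matrix (Fin p) (Fin m) ℂ)
    (hG12 : IsUnit (G12ᴴ * G12))
    (X : Matrix (Fin m) (Fin p) ℂ) (Y : Matrix (Fin m) (Fin m) ℂ)
    (hY : IsUnit Y) (hM : IsUnit (Y - X * G22))
    (Γhat : Matrix (Fin r) (Fin r) ℂ) (hΓ : Γhat.IsHermitian) :
    (Γhat - (G11 + G12 * (Y - X * G22)⁻¹ * X * G21)ᴴ *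
        (G11 + G12 * (Y - X * G22)⁻¹ * X * G21)).PosSemidef ↔
    (Matrix.fromBlocks
        (Γhat - ((1 - G12 * leftInv G12) * G11)ᴴ * ((1 - G12 * leftInv G12) * G11))
        (((Y - X * G22) * leftInv G12) * G11 + X * G21)ᴴ
        (((Y - X * G22) * leftInv G12) * G11 + X * G21)
        (((Y - X * G22) * leftInv G12) * ((Y - X * G22) * leftInv G12)ᴴ)).PosSemidef :=
  spatial_regret_schur_equivalence_general G11 G12 G21 G22 hG12 X Y hM Γhat
end

section
/- Let G₁₁ (q × r), G₁₂ (q × m), G₂₁ (p × r), G₂₂ (p × m) be complex matrices with G₁₂ᴴG₁₂ invertible, let X (m × p) and Y (m × m) be complex matrices with Y invertible and M := Y − X·G₂₂ invertible, set G₁₂^L := (G₁₂ᴴG₁₂)⁻¹G₁₂ᴴ, Φ := M·G₁₂^L, Ψ := I − G₁₂·G₁₂^L, T := G₁₁ + G₁₂·M⁻¹·X·G₂₁, let Γ̂ be a Hermitian r × r complex matrix, and let Φ_c be any m × q complex matrix. If the block matrix fromBlocks (Γ̂ − (Ψ·G₁₁)ᴴ·(Ψ·G₁₁)) (Φ·G₁₁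 + X·G₂₁)ᴴ (Φ·G₁₁ + X·G₂₁) (Φ_c·Φᴴ + Φ·Φ_cᴴ − Φ_c·Φ_cᴴ) is positive semidefinite, then Γ̂ − Tᴴ·T is positive semidefinite. -/
open Matrix ComplexOrder

/-!
The linearised corner `ΦcΦᴴ + ΦΦcᴴ − ΦcΦcᴴ` falls short of `ΦΦᴴ` by `(Φ − Φc)(Φ − Φc)ᴴ ⪰ 0`, so the
hypothesis stays true with `ΦΦᴴ = M(G₁₂ᴴG₁₂)⁻¹Mᴴ ≻ 0` in the corner, and its Schur complement gives
`Γ̂ − (ΨG₁₁)ᴴ(ΨG₁₁) − Bᴴ(ΦΦᴴ)⁻¹B ⪰ 0` with `B := ΦG₁₁ + XG₂₁`. Writing `T = ΨG₁₁ + G₁₂M⁻¹B`, the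
two summands are orthogonal (`G₁₂ᴴΨ = 0`), so `TᴴT = (ΨG₁₁)ᴴ(ΨG₁₁) + Bᴴ(ΦΦᴴ)⁻¹B`.
-/

namespace Matrix

variable {l m n : Type*} [Fintype m]

theorem conjTranspose_mul_self_add_mul_of_conjTranspose_mul_eq_zero [Fintype l] {R : Type*}
    [Ring R] [StarRing R] {S : Matrix l n R} {G : Matrix l m R} (W : Matrix m n R)
    (h : Gᴴ * S = 0) :
    (S + G * W)ᴴ * (S + G * W) = Sᴴ * S + Wᴴ * (Gᴴ * G) * W := by
  have h' : Sᴴ * G = 0 := by simpa using congrArg conjTranspose h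
  rw [conjTranspose_add, Matrix.add_mul, Matrix.mul_add, Matrix.mul_add, ← Matrix.mul_assoc Sᴴ, h',
    conjTranspose_mul, Matrix.mul_assoc Wᴴ, h]
  simp only [Matrix.zero_mul, Matrix.mul_zero, add_zero, zero_add, Matrix.mul_assoc]

variable [Fintype n] {R : Type*} [CommRing R] [PartialOrder R] [StarRing R] [StarOrderedRing R]

theorem PosSemidef.fromBlocks_mono₂₂ {A : Matrix m m R} {B : Matrix m n R} {C : Matrix n m R}
    {D E : Matrix n n R} (h : (fromBlocks A B C D).PosSemidef) (hDE : (E - D).PosSemidef) :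
    (fromBlocks A B C E).PosSemidef := by
  classical
  have hcorner : (fromBlocks 0 0 0 (E - D) : Matrix (m ⊕ n) (m ⊕ n) R).PosSemidef := by
    have := hDE.conjTranspose_mul_mul_same (fromCols (0 : Matrix n m R) (1 : Matrix n n R))
    rwa [conjTranspose_fromCols_eq_fromRows_conjTranspose, fromRows_mul, fromRows_mul_fromCols,
      conjTranspose_zero, conjTranspose_one, Matrix.zero_mul, Matrix.zero_mul, Matrix.mul_zero,
      Matrix.one_mul, Matrix.mul_one, Matrix.mul_one] at this
  simpa [fromBlocks_add] using h.add hcorner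

theorem posSemidef_mul_conjTranspose_sub_tangent (Φ Φc : Matrix m n R) :
    (Φ * Φᴴ - (Φc * Φᴴ + Φ * Φcᴴ - Φc * Φcᴴ)).PosSemidef := by
  have h : Φ * Φᴴ - (Φc * Φᴴ + Φ * Φcᴴ - Φc * Φcᴴ) = (Φ - Φc) * (Φ - Φc)ᴴ := by
    simp only [conjTranspose_sub, Matrix.sub_mul, Matrix.mul_sub]
    abel
  exact h ▸ posSemidef_self_mul_conjTranspose _

end Matrix

section leftInv

variable {q m : ℕ} {G : Matrix (Fin q) (Fin m) ℂ}

theorem leftInv_mul_conjTranspose_leftInv (hG : IsUnit (Gᴴ * G)) :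
    leftInv G * (leftInv G)ᴴ = (Gᴴ * G)⁻¹ := by
  have hH : (Gᴴ * G)⁻¹ᴴ = (Gᴴ * G)⁻¹ := by
    rw [conjTranspose_nonsing_inv, conjTranspose_mul, conjTranspose_conjTranspose]
  rw [leftInv, conjTranspose_mul, conjTranspose_conjTranspose, hH, Matrix.mul_assoc,
    ← Matrix.mul_assoc Gᴴ, mul_nonsing_inv _ ((isUnit_iff_isUnit_det _).mp hG), Matrix.mul_one]

theorem conjTranspose_mul_one_sub_mul_leftInv (hG : IsUnit (Gᴴ * G)) :
    Gᴴ * (1 - G * leftInv G) = 0 := by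
  rw [leftInv, Matrix.mul_sub, Matrix.mul_one, ← Matrix.mul_assoc, ← Matrix.mul_assoc,
    mul_nonsing_inv _ ((isUnit_iff_isUnit_det _).mp hG), Matrix.one_mul, sub_self]

end leftInv

theorem spatial_regret_convexification_general {q r p m : ℕ}
    (G11 : Matrix (Fin q) (Fin r) ℂ) (G12 : Matrix (Fin q) (Fin m) ℂ)
    (G21 : Matrix (Fin p) (Fin r) ℂ) (G22 : Matrix (Fin p) (Fin m) ℂ)
    (hG12 : IsUnit (G12ᴴ * G12))
    (X : Matrix (Fin m) (Fin p) ℂ) (Y : Matrix (Fin m) (Fin m) ℂ)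
    (hM : IsUnit (Y - X * G22))
    (Γhat : Matrix (Fin r) (Fin r) ℂ)
    (Φc : Matrix (Fin m) (Fin q) ℂ)
    (h : (Matrix.fromBlocks
        (Γhat - ((1 - G12 * leftInv G12) * G11)ᴴ * ((1 - G12 * leftInv G12) * G11))
        (((Y - X * G22) * leftInv G12) * G11 + X * G21)ᴴ
        (((Y - X * G22) * leftInv G12) * G11 + X * G21)
        (Φc * ((Y - X * G22) * leftInv G12)ᴴ +
          ((Y - X * G22) * leftInv G12) * Φcᴴ - Φc * Φcᴴ)).PosSemidef) :
    (Γhat - (G11 + G12 * (Y - X * G22)⁻¹ * X * G21)ᴴ *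
        (G11 + G12 * (Y - X * G22)⁻¹ * X * G21)).PosSemidef := by
  set M := Y - X * G22
  set N := G12ᴴ * G12
  set Φ := M * leftInv G12
  set S := (1 - G12 * leftInv G12) * G11
  set B := Φ * G11 + X * G21
  have hΦΦ : Φ * Φᴴ = M * N⁻¹ * Mᴴ := by
    rw [conjTranspose_mul, Matrix.mul_assoc, ← Matrix.mul_assoc (leftInv G12),
      leftInv_mul_conjTranspose_leftInv hG12, Matrix.mul_assoc]
  have hN : N.PosDef := (posSemidef_conjTranspose_mul_self G12).posDef_iff_isUnit.mpr hG12
  have hD : (M * N⁻¹ * Mᴴ).PosDef := hM.posDef_star_right_conjugate_iff.mpr hN.inv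
  have hblock : (fromBlocks (Γhat - Sᴴ * S) Bᴴ B (M * N⁻¹ * Mᴴ)).PosSemidef :=
    hΦΦ ▸ h.fromBlocks_mono₂₂ (posSemidef_mul_conjTranspose_sub_tangent Φ Φc)
  have _ := hD.isUnit.invertible
  have hschur := (hD.fromBlocks₂₂ (Γhat - Sᴴ * S) Bᴴ).mp (by simpa using hblock)
  have hT : G11 + G12 * M⁻¹ * X * G21 = S + G12 * (M⁻¹ * B) := by
    rw [Matrix.mul_add, Matrix.mul_assoc M, ← Matrix.mul_assoc M⁻¹ M,
      nonsing_inv_mul _ ((isUnit_iff_isUnit_det _).mp hM), Matrix.one_mul]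
    simp only [S, Matrix.sub_mul, Matrix.one_mul, Matrix.mul_add, Matrix.mul_assoc]
    abel
  have hquad : (M⁻¹ * B)ᴴ * N * (M⁻¹ * B) = Bᴴ * (M * N⁻¹ * Mᴴ)⁻¹ * B := by
    rw [Matrix.mul_inv_rev, Matrix.mul_inv_rev,
      nonsing_inv_nonsing_inv _ ((isUnit_iff_isUnit_det _).mp hG12), ← conjTranspose_nonsing_inv,
      conjTranspose_mul]
    simp only [Matrix.mul_assoc]
  rw [hT, conjTranspose_mul_self_add_mul_of_conjTranspose_mul_eq_zero _
    (by rw [← Matrix.mul_assoc, conjTranspose_mul_one_sub_mul_leftInv hG12, Matrix.zero_mul]),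
    hquad, ← sub_sub]
  simpa using hschur

/-- Pointwise content of the convexification theorem: if the linearised block
matrix inequality — in which the nonconvex block `ΦΦᴴ` is replaced by its convex
lower bound `ΦcΦᴴ + ΦΦcᴴ − ΦcΦcᴴ` built from the current iterate `Φc` — is
positive semidefinite, then the true spatial-regret constraint `TᴴT ⪯ Γ̂` holds
for the closed-loop matrix `T := G₁₁ + G₁₂·M⁻¹·X·G₂₁`, where `M := Y − X·G₂₂`,
`Φ := M·G₁₂^L`, `Ψ := I − G₁₂·G₁₂^L`. -/
theorem spatial_regret_convexification {q r p m : ℕ}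
    (G11 : Matrix (Fin q) (Fin r) ℂ) (G12 : Matrix (Fin q) (Fin m) ℂ)
    (G21 : Matrix (Fin p) (Fin r) ℂ) (G22 : Matrix (Fin p) (Fin m) ℂ)
    (hG12 : IsUnit (G12ᴴ * G12))
    (X : Matrix (Fin m) (Fin p) ℂ) (Y : Matrix (Fin m) (Fin m) ℂ)
    (hY : IsUnit Y) (hM : IsUnit (Y - X * G22))
    (Γhat : Matrix (Fin r) (Fin r) ℂ) (hΓ : Γhat.IsHermitian)
    (Φc : Matrix (Fin m) (Fin q) ℂ)
    (h : (Matrix.fromBlocks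
        (Γhat - ((1 - G12 * leftInv G12) * G11)ᴴ * ((1 - G12 * leftInv G12) * G11))
        (((Y - X * G22) * leftInv G12) * G11 + X * G21)ᴴ
        (((Y - X * G22) * leftInv G12) * G11 + X * G21)
        (Φc * ((Y - X * G22) * leftInv G12)ᴴ +
          ((Y - X * G22) * leftInv G12) * Φcᴴ - Φc * Φcᴴ)).PosSemidef) :
    (Γhat - (G11 + G12 * (Y - X * G22)⁻¹ * X * G21)ᴴ *
        (G11 + G12 * (Y - X * G22)⁻¹ * X * G21)).PosSemidef :=
  spatial_regret_convexification_general G11 G12 G21 G22 hG12 X Y hM Γhat Φc h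
end

section
/- Let K be an n_o × n_i matrix with entries in the field RatFunc ℝ of real rational functions, and let ρ be a real number. Then there exist a natural number d and a nonzero y ∈ RatFunc ℝ such that: (i) the reduced denominator of y divides (X − ρ)^d and the integer degree of y is ≤ 0 (y is proper with all poles at ρ); and (ii) for every index pair (i,j), the reduced denominator of y · K i j divides (X − ρ)^d, if K i j has integer degree ≤ 0 then y · K i j has integer degree ≤ 0, and if K i j = 0 then y · K i j = 0. In particular, K = (y • I)⁻¹ · (y • K) exhibits a left factorisation K = Y⁻¹X with Y := y • I diagonal and X := y • K having the same sparsity pattern as K. -/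
open Polynomial

set_option synthInstance.maxHeartbeats 400000

-- auxiliary: intDegree of a quotient of polynomials
lemma intDegree_div_aux {p q : ℝ[X]} (hp : p ≠ 0) (hq : q ≠ 0) :
    (algebraMap ℝ[X] (RatFunc ℝ) p / algebraMap ℝ[X] (RatFunc ℝ) q).intDegree
      = (p.natDegree : ℤ) - q.natDegree := by
  have hp' : algebraMap ℝ[X] (RatFunc ℝ) p ≠ 0 := by
    simpa using (RatFunc.algebraMap_ne_zero hp)
  have hq' : algebraMap ℝ[X] (RatFunc ℝ) q ≠ 0 := by
    simpa using (RatFunc.algebraMap_ne_zero hq)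
  have hy : algebraMap ℝ[X] (RatFunc ℝ) p / algebraMap ℝ[X] (RatFunc ℝ) q ≠ 0 :=
    div_ne_zero hp' hq'
  have h := RatFunc.intDegree_mul hy hq'
  rw [div_mul_cancel₀ _ hq'] at h
  rw [RatFunc.intDegree_polynomial, RatFunc.intDegree_polynomial] at h
  omega

set_option maxHeartbeats 1000000 in
/-- Constructive direction of the left-factorisation lemma: any matrix `K` of real
rational functions admits a scalar `y ≠ 0`, proper with all poles at `ρ` (its reduced
denominator divides `(X − ρ)^d` and its integer degree is `≤ 0`), such that each entry
`y · K i j` also has reduced denominator dividing `(X − ρ)^d`, is proper whenever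
`K i j` is proper, and vanishes whenever `K i j` vanishes; in particular
`K = (y • I)⁻¹ · (y • K)` is a left factorisation with diagonal left factor and right
factor of the same sparsity pattern as `K`. -/
theorem left_factorisation_exists {no ni : ℕ}
    (K : Matrix (Fin no) (Fin ni) (RatFunc ℝ)) (ρ : ℝ) :
    ∃ (d : ℕ) (y : RatFunc ℝ), y ≠ 0 ∧
      y.denom ∣ (Polynomial.X - Polynomial.C ρ) ^ d ∧ y.intDegree ≤ 0 ∧
      (∀ i j, (y * K i j).denom ∣ (Polynomial.X - Polynomial.C ρ) ^ d ∧
        ((K i j).intDegree ≤ 0 → (y * K i j).intDegree ≤ 0) ∧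
        (K i j = 0 → y * K i j = 0)) ∧
      (y • (1 : Matrix (Fin no) (Fin no) (RatFunc ℝ)))⁻¹ * (y • K) = K := by
  classical
  set P : ℝ[X] := ∏ i : Fin no, ∏ j : Fin ni, (K i j).denom with hP
  have hPne : P ≠ 0 := by
    apply Finset.prod_ne_zero_iff.2
    intro i _
    exact Finset.prod_ne_zero_iff.2 fun j _ => (K i j).denom_ne_zero
  set d : ℕ := P.natDegree with hd
  set q : ℝ[X] := (Polynomial.X - Polynomial.C ρ) ^ d with hq
  have hqne : q ≠ 0 := pow_ne_zero _ (X_sub_C_ne_zero ρ)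
  set y : RatFunc ℝ := algebraMap ℝ[X] (RatFunc ℝ) P / algebraMap ℝ[X] (RatFunc ℝ) q with hy
  have hP' : algebraMap ℝ[X] (RatFunc ℝ) P ≠ 0 := RatFunc.algebraMap_ne_zero hPne
  have hq' : algebraMap ℝ[X] (RatFunc ℝ) q ≠ 0 := RatFunc.algebraMap_ne_zero hqne
  have hyne : y ≠ 0 := div_ne_zero hP' hq'
  have hdegq : q.natDegree = d := by
    rw [hq, natDegree_pow, natDegree_X_sub_C, mul_one]
  have hydeg : y.intDegree ≤ 0 := by
    rw [hy, intDegree_div_aux hPne hqne, hdegq]; omega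
  refine ⟨d, y, hyne, ?_, hydeg, ?_, ?_⟩
  · simpa only [hy] using RatFunc.denom_div_dvd P q
  · intro i j
    by_cases hK : K i j = 0
    · simp [hK, RatFunc.denom_zero]
    constructor
    · -- denom of y * K i j divides q
      have hdvd : (K i j).denom ∣ P := by
        refine dvd_trans ?_ (Finset.dvd_prod_of_mem _ (Finset.mem_univ i))
        exact Finset.dvd_prod_of_mem _ (Finset.mem_univ j)
      obtain ⟨Q, hQ⟩ := hdvd
      have hden : algebraMap ℝ[X] (RatFunc ℝ) (K i j).denom ≠ 0 :=
        RatFunc.algebraMap_ne_zero (K i j).denom_ne_zero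
      have key : y * K i j
          = algebraMap ℝ[X] (RatFunc ℝ) (Q * (K i j).num) / algebraMap ℝ[X] (RatFunc ℝ) q := by
        have h2 : algebraMap ℝ[X] (RatFunc ℝ) (K i j).num
            = K i j * algebraMap ℝ[X] (RatFunc ℝ) (K i j).denom :=
          (div_eq_iff hden).mp (RatFunc.num_div_denom (K i j))
        rw [hy, hQ, map_mul, map_mul, h2]
        field_simp
      rw [key]
      exact RatFunc.denom_div_dvd _ _
    constructor
    · intro hle
      have := RatFunc.intDegree_mul hyne hK
      rw [this]; omega
    · intro h; exact absurd h hK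
  · -- matrix identity
    have hdet : IsUnit (y • (1 : Matrix (Fin no) (Fin no) (RatFunc ℝ))).det := by
      rw [Matrix.det_smul, Matrix.det_one, mul_one]
      exact (pow_ne_zero _ hyne).isUnit
    have h1 : y • K = (y • (1 : Matrix (Fin no) (Fin no) (RatFunc ℝ))) * K := by
      rw [Matrix.smul_mul, Matrix.one_mul]
    rw [h1, ← Matrix.mul_assoc, Matrix.nonsing_inv_mul _ hdet, Matrix.one_mul]
end
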